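/- Approximate evaluation at a KKT point: Let δ ∈ (0,1) and let (y,z) ∈ [0,1]^{3n−4} be a KKT point of the polynomial p constructed from the truncated-linear program. Then for every i ∈ {3,…,n}: (a) |(1/(2δ^i)) · ∂p_i/∂y_i(y,z)| ≤ (2Kδ)^{n+1−i}; (b) y_i = trunc(Σ_{j<i} a_{ij} y_j + c_i − (1/(2δ^i)) · ∂p_i/∂y_i(y,z)); and consequently (c) |y_i − trunc(Σ_{j<i} a_{ij} y_j + c_i)| ≤ (2Kδ)^{n+1−i}. -/

import Mathlib

/-!
Write `s_i = Σ_{j<i} a_{ij} y_j + c_i` for the input of gate `i`. Differentiating `p` gives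
`∂p/∂y_i = 2δ^i (y_i - s_i) + ∂p_i/∂y_i`, so the box KKT condition in `y_i` says exactly that
`y_i = trunc (s_i - E_i)` with `E_i = ∂p_i/∂y_i / (2δ^i)`, and (c) follows from (a) because `trunc`
is 1-Lipschitz. The KKT conditions in `z_i^±` force `K z_i^+ = max 0 (s_i - 1)` and
`K z_i^- = max 0 (-s_i)`, so the residual `y_i + K z_i^+ - K z_i^- - s_i` of gate `i` is
`y_i - trunc s_i`, of size at most `|E_i|`. Finally
`∂p_i/∂y_i = δ^{n+1} [i = n] - 2 Σ_{l>i} δ^l a_{li} (residual of gate l)`, so (a) follows by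
downward induction on `i`, with `K ≥ 1` absorbing the geometric tail.
-/

noncomputable section

/-- Truncation to the unit interval. -/
def trunc (z : ℝ) : ℝ := min 1 (max 0 z)

/-- The term `q_i` of the quadratic polynomial, implementing the `i`-th gate. -/
def qval (K : ℝ) (a : ℕ → ℕ → ℝ) (c : ℕ → ℝ) (i : ℕ) (y zp zm : ℕ → ℝ) : ℝ :=
  (y i + K * zp i - K * zm i - (∑ j ∈ Finset.Ico 1 i, a i j * y j) - c i) ^ 2
    + 2 * K ^ 2 * zp i * zm i + 2 * K * zp i * (1 - y i) + 2 * K * zm i * y i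

/-- The quadratic polynomial `p(y,z) = δ^{n+1} y_n + Σ_{i=3}^n δ^i q_i(y,z)`. -/
def pval (n : ℕ) (K δ : ℝ) (a : ℕ → ℕ → ℝ) (c : ℕ → ℝ) (y zp zm : ℕ → ℝ) : ℝ :=
  δ ^ (n + 1) * y n + ∑ i ∈ Finset.Icc 3 n, δ ^ i * qval K a c i y zp zm

/-- The partial derivative `∂p/∂y_k`. -/
def dpy (n : ℕ) (K δ : ℝ) (a : ℕ → ℕ → ℝ) (c : ℕ → ℝ) (k : ℕ) (y zp zm : ℕ → ℝ) : ℝ :=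
  deriv (fun t => pval n K δ a c (Function.update y k t) zp zm) (y k)

/-- The partial derivative `∂p/∂z_k⁺`. -/
def dpzp (n : ℕ) (K δ : ℝ) (a : ℕ → ℕ → ℝ) (c : ℕ → ℝ) (k : ℕ) (y zp zm : ℕ → ℝ) : ℝ :=
  deriv (fun t => pval n K δ a c y (Function.update zp k t) zm) (zp k)

/-- The partial derivative `∂p/∂z_k⁻`. -/
def dpzm (n : ℕ) (K δ : ℝ) (a : ℕ → ℕ → ℝ) (c : ℕ → ℝ) (k : ℕ) (y zp zm : ℕ → ℝ) : ℝ :=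
  deriv (fun t => pval n K δ a c y zp (Function.update zm k t)) (zm k)

/-- `(y, z⁺, z⁻) ∈ [0,1]^{3n−4}` is a KKT point of the minimization of `p` over the box. -/
def IsKKT (n : ℕ) (K δ : ℝ) (a : ℕ → ℕ → ℝ) (c : ℕ → ℝ) (y zp zm : ℕ → ℝ) : Prop :=
  (∀ i, 1 ≤ i → i ≤ n → y i ∈ Set.Icc (0 : ℝ) 1) ∧
  (∀ i, 3 ≤ i → i ≤ n → zp i ∈ Set.Icc (0 : ℝ) 1 ∧ zm i ∈ Set.Icc (0 : ℝ) 1) ∧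
  (∀ i, 1 ≤ i → i ≤ n →
    (0 < y i → dpy n K δ a c i y zp zm ≤ 0) ∧ (y i < 1 → 0 ≤ dpy n K δ a c i y zp zm)) ∧
  (∀ i, 3 ≤ i → i ≤ n →
    ((0 < zp i → dpzp n K δ a c i y zp zm ≤ 0) ∧ (zp i < 1 → 0 ≤ dpzp n K δ a c i y zp zm)) ∧
    ((0 < zm i → dpzm n K δ a c i y zp zm ≤ 0) ∧ (zm i < 1 → 0 ≤ dpzm n K δ a c i y zp zm)))

/-- The tail polynomial `p_i(y,z) = δ^{n+1} y_n + Σ_{ℓ=i+1}^n δ^ℓ q_ℓ(y,z)`. -/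
def pival (n : ℕ) (K δ : ℝ) (a : ℕ → ℕ → ℝ) (c : ℕ → ℝ) (i : ℕ) (y zp zm : ℕ → ℝ) : ℝ :=
  δ ^ (n + 1) * y n + ∑ l ∈ Finset.Icc (i + 1) n, δ ^ l * qval K a c l y zp zm

/-- The partial derivative `∂p_i/∂y_k`. -/
def dpiy (n : ℕ) (K δ : ℝ) (a : ℕ → ℕ → ℝ) (c : ℕ → ℝ) (i k : ℕ) (y zp zm : ℕ → ℝ) : ℝ :=
  deriv (fun t => pival n K δ a c i (Function.update y k t) zp zm) (y k)

open Finset Function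

theorem abs_trunc_sub_trunc_le (u v : ℝ) : |trunc u - trunc v| ≤ |u - v| := by
  unfold trunc
  calc |min 1 (max 0 u) - min 1 (max 0 v)| ≤ max |1 - 1| |max 0 u - max 0 v| :=
        abs_min_sub_min_le_max _ _ _ _
    _ ≤ |u - v| := by
        rw [sub_self, abs_zero, max_comm 0 u, max_comm 0 v]
        exact max_le (abs_nonneg _) (abs_max_sub_max_le_abs _ _ _)

theorem eq_trunc_of_stationary {w X α : ℝ} (hα : 0 < α) (hw : w ∈ Set.Icc 0 1)
    (h0 : 0 < w → α * (w - X) ≤ 0) (h1 : w < 1 → 0 ≤ α * (w - X)) : w = trunc X := by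
  have h0' : 0 < w → w ≤ X := fun h => by nlinarith [h0 h]
  have h1' : w < 1 → X ≤ w := fun h => by nlinarith [h1 h]
  unfold trunc
  rcases hw.1.eq_or_lt with rfl | hw0
  · simp [h1' one_pos]
  rcases hw.2.eq_or_lt with rfl | hw1
  · simp [h0' one_pos]
  rw [le_antisymm (h1' hw1) (h0' hw0), max_eq_right hw.1, min_eq_right hw.2]

theorem sub_mul_trunc_add_mul_trunc {K s : ℝ} (hK : 0 < K) (hlo : -K ≤ s) (hhi : s ≤ K + 1) :
    s - K * trunc ((s - 1) / K) + K * trunc (-s / K) = trunc s := by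
  have hp : (s - 1) / K ≤ 1 := by rw [div_le_one hK]; linarith
  have hm : -s / K ≤ 1 := by rw [div_le_one hK]; linarith
  unfold trunc
  rw [min_eq_right (max_le zero_le_one hp), min_eq_right (max_le zero_le_one hm),
    mul_max_of_nonneg _ _ hK.le, mul_max_of_nonneg _ _ hK.le, mul_div_cancel₀ _ hK.ne',
    mul_div_cancel₀ _ hK.ne', mul_zero]
  rcases le_total s 0 with hs | hs
  · rw [max_eq_left (by linarith : s - 1 ≤ 0), max_eq_right (by linarith : 0 ≤ -s),
      max_eq_left hs, min_eq_right zero_le_one]; ring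
  rcases le_total s 1 with hs1 | hs1
  · rw [max_eq_left (by linarith : s - 1 ≤ 0), max_eq_left (by linarith : -s ≤ 0),
      max_eq_right hs, min_eq_right hs1]; ring
  · rw [max_eq_right (by linarith : 0 ≤ s - 1), max_eq_left (by linarith : -s ≤ 0),
      max_eq_right hs, min_eq_left hs1]; ring

theorem hasDerivAt_update_apply {ι 𝕜 : Type*} [DecidableEq ι] [NontriviallyNormedField 𝕜]
    (y : ι → 𝕜) (k j : ι) :
    HasDerivAt (fun t => update y k t j) (if j = k then 1 else 0) (y k) := by
  rcases eq_or_ne j k with rfl | hjk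
  · simpa using hasDerivAt_id' (y j)
  · simpa [update_of_ne hjk, hjk] using hasDerivAt_const (y k) (y j)

theorem hasDerivAt_sum_mul_update {ι 𝕜 : Type*} [DecidableEq ι] [NontriviallyNormedField 𝕜]
    (s : Finset ι) (a y : ι → 𝕜) (k : ι) :
    HasDerivAt (fun t => ∑ j ∈ s, a j * update y k t j) (if k ∈ s then a k else 0) (y k) := by
  refine (HasDerivAt.fun_sum fun j _ =>
    (hasDerivAt_update_apply y k j).const_mul (a j)).congr_deriv ?_
  simp

def gateInput (a : ℕ → ℕ → ℝ) (c : ℕ → ℝ) (y : ℕ → ℝ) (i : ℕ) : ℝ :=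
  (∑ j ∈ Ico 1 i, a i j * y j) + c i

def gateResidual (K : ℝ) (a : ℕ → ℕ → ℝ) (c : ℕ → ℝ) (y zp zm : ℕ → ℝ) (i : ℕ) : ℝ :=
  y i + K * zp i - K * zm i - gateInput a c y i

def dqy (K : ℝ) (a : ℕ → ℕ → ℝ) (c : ℕ → ℝ) (k l : ℕ) (y zp zm : ℕ → ℝ) : ℝ :=
  2 * gateResidual K a c y zp zm l * ((if l = k then 1 else 0) - if k ∈ Ico 1 l then a l k else 0)
    + 2 * K * (zm l - zp l) * (if l = k then 1 else 0)

section QvalDerivatives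

variable (K : ℝ) (a : ℕ → ℕ → ℝ) (c : ℕ → ℝ) (y zp zm : ℕ → ℝ)

theorem hasDerivAt_qval_update_y (k l : ℕ) :
    HasDerivAt (fun t => qval K a c l (update y k t) zp zm) (dqy K a c k l y zp zm) (y k) := by
  have hy := hasDerivAt_update_apply y k l
  have hsum := hasDerivAt_sum_mul_update (Ico 1 l) (a l) y k
  have hres :=
    ((((hy.add_const (K * zp l)).sub_const (K * zm l)).fun_sub hsum).sub_const (c l)).fun_pow 2
  refine (((hres.add_const (2 * K ^ 2 * zp l * zm l)).fun_add
    ((hy.const_sub 1).const_mul (2 * K * zp l))).fun_add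
    (hy.const_mul (2 * K * zm l))).congr_deriv ?_
  simp only [dqy, gateResidual, gateInput, update_eq_self]
  push_cast
  ring

theorem hasDerivAt_qval_update_zp (k l : ℕ) :
    HasDerivAt (fun t => qval K a c l y (update zp k t) zm)
      ((if l = k then 1 else 0) * (2 * K * (K * zp l + 1 - gateInput a c y l))) (zp k) := by
  have hz := hasDerivAt_update_apply zp k l
  have hres := ((((hz.const_mul K).const_add (y l)).sub_const (K * zm l)).sub_const
    (∑ j ∈ Ico 1 l, a l j * y j)).sub_const (c l) |>.fun_pow 2
  refine (((hres.fun_add ((hz.const_mul (2 * K ^ 2)).mul_const (zm l))).fun_add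
    ((hz.const_mul (2 * K)).mul_const (1 - y l))).add_const (2 * K * zm l * y l)).congr_deriv ?_
  simp only [gateInput, update_eq_self]
  push_cast
  ring

theorem hasDerivAt_qval_update_zm (k l : ℕ) :
    HasDerivAt (fun t => qval K a c l y zp (update zm k t))
      ((if l = k then 1 else 0) * (2 * K * (K * zm l + gateInput a c y l))) (zm k) := by
  have hz := hasDerivAt_update_apply zm k l
  have hres := ((((hz.const_mul K).const_sub (y l + K * zp l)).sub_const
    (∑ j ∈ Ico 1 l, a l j * y j)).sub_const (c l)).fun_pow 2
  refine (((hres.fun_add ((hz.const_mul (2 * K ^ 2 * zp l)))).add_const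
    (2 * K * zp l * (1 - y l))).fun_add ((hz.const_mul (2 * K)).mul_const (y l))).congr_deriv ?_
  simp only [gateInput, update_eq_self]
  push_cast
  ring

end QvalDerivatives

section Dqy

variable {K : ℝ} {a : ℕ → ℕ → ℝ} {c : ℕ → ℝ} {y zp zm : ℕ → ℝ}

theorem dqy_self (l : ℕ) : dqy K a c l l y zp zm = 2 * (y l - gateInput a c y l) := by
  simp only [dqy, gateResidual, if_true, Finset.mem_Ico, lt_irrefl, and_false, if_false]
  ring

theorem dqy_eq_zero {k l : ℕ} (h : l < k) : dqy K a c k l y zp zm = 0 := by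
  simp [dqy, h.ne, h.not_gt]

theorem dqy_of_lt {k l : ℕ} (hk : 1 ≤ k) (h : k < l) :
    dqy K a c k l y zp zm = -2 * a l k * gateResidual K a c y zp zm l := by
  simp only [dqy, h.ne', if_false, Finset.mem_Ico, hk, h, and_self, if_true]
  ring

end Dqy

section PartialDerivatives

variable (n : ℕ) (K δ : ℝ) (a : ℕ → ℕ → ℝ) (c : ℕ → ℝ) (y zp zm : ℕ → ℝ)

theorem hasDerivAt_objective_update_y (L : Finset ℕ) (k : ℕ) :
    HasDerivAt
      (fun t => δ ^ (n + 1) * update y k t n + ∑ l ∈ L, δ ^ l * qval K a c l (update y k t) zp zm)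
      (δ ^ (n + 1) * (if n = k then 1 else 0) + ∑ l ∈ L, δ ^ l * dqy K a c k l y zp zm) (y k) :=
  ((hasDerivAt_update_apply y k n).const_mul _).fun_add
    (HasDerivAt.fun_sum fun l _ => (hasDerivAt_qval_update_y K a c y zp zm k l).const_mul _)

theorem dpiy_eq {i : ℕ} (hi : 1 ≤ i) :
    dpiy n K δ a c i i y zp zm = δ ^ (n + 1) * (if n = i then 1 else 0)
      + ∑ l ∈ Icc (i + 1) n, δ ^ l * (-2 * a l i * gateResidual K a c y zp zm l) := by
  have hd : dpiy n K δ a c i i y zp zm = _ :=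
    (hasDerivAt_objective_update_y n K δ a c y zp zm _ i).deriv
  rw [hd]
  congr 1
  refine sum_congr rfl fun l hl => ?_
  rw [dqy_of_lt hi (by simp at hl; omega)]

theorem dpy_eq {i : ℕ} (hi : 3 ≤ i) (hin : i ≤ n) :
    dpy n K δ a c i y zp zm
      = 2 * δ ^ i * (y i - gateInput a c y i) + dpiy n K δ a c i i y zp zm := by
  have hsplit : Icc 3 n \ Icc (i + 1) n = Icc 3 i := by ext; simp; omega
  have hd : dpy n K δ a c i y zp zm = _ :=
    (hasDerivAt_objective_update_y n K δ a c y zp zm _ i).deriv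
  have hdi : dpiy n K δ a c i i y zp zm = _ :=
    (hasDerivAt_objective_update_y n K δ a c y zp zm _ i).deriv
  rw [hd, hdi,
    ← sum_sdiff (Icc_subset_Icc_left (by omega : 3 ≤ i + 1)), hsplit,
    sum_eq_single_of_mem i (by simp; omega) fun l hl hli => by
      rw [dqy_eq_zero (by simp at hl; omega), mul_zero], dqy_self]
  ring

theorem dpzp_eq {i : ℕ} (hi : 3 ≤ i) (hin : i ≤ n) :
    dpzp n K δ a c i y zp zm = δ ^ i * (2 * K * (K * zp i + 1 - gateInput a c y i)) := by
  have hd : dpzp n K δ a c i y zp zm = _ := ((hasDerivAt_const _ _).fun_add (HasDerivAt.fun_sum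
    fun l _ => (hasDerivAt_qval_update_zp K a c y zp zm i l).const_mul (δ ^ l))).deriv
  rw [hd]
  simp [ite_mul, hi, hin]

theorem dpzm_eq {i : ℕ} (hi : 3 ≤ i) (hin : i ≤ n) :
    dpzm n K δ a c i y zp zm = δ ^ i * (2 * K * (K * zm i + gateInput a c y i)) := by
  have hd : dpzm n K δ a c i y zp zm = _ := ((hasDerivAt_const _ _).fun_add (HasDerivAt.fun_sum
    fun l _ => (hasDerivAt_qval_update_zm K a c y zp zm i l).const_mul (δ ^ l))).deriv
  rw [hd]
  simp [ite_mul, hi, hin]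

end PartialDerivatives

theorem tail_sum_le {K δ : ℝ} (hK : 1 ≤ K) (hδ : 0 ≤ δ) {i n : ℕ} (hin : i ≤ n) :
    δ ^ (n + 1) + ∑ l ∈ Icc (i + 1) n, δ ^ l * (2 * K) * (2 * K * δ) ^ (n + 1 - l)
      ≤ 2 * δ ^ i * (2 * K * δ) ^ (n + 1 - i) := by
  induction hin using Nat.decreasingInduction with
  | self =>
    rw [Icc_eq_empty (by omega), sum_empty, add_zero, Nat.add_sub_cancel_left, pow_one, pow_succ]
    nlinarith [mul_nonneg (pow_nonneg hδ n) hδ]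
  | of_succ k hk ih =>
    rw [← insert_Icc_add_one_left_eq_Icc (by omega : k + 1 ≤ n), sum_insert (by simp),
      show n + 1 - (k + 1) = n - k by omega, show n + 1 - k = n - k + 1 by omega] at *
    have hB : 0 ≤ δ ^ (k + 1) * (2 * K * δ) ^ (n - k) := by positivity
    calc δ ^ (n + 1) + (δ ^ (k + 1) * (2 * K) * (2 * K * δ) ^ (n - k)
          + ∑ l ∈ Icc (k + 1 + 1) n, δ ^ l * (2 * K) * (2 * K * δ) ^ (n + 1 - l))
        ≤ (2 * K + 2) * (δ ^ (k + 1) * (2 * K * δ) ^ (n - k)) := by linarith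
      _ ≤ 4 * K * (δ ^ (k + 1) * (2 * K * δ) ^ (n - k)) := by nlinarith
      _ = 2 * δ ^ k * (2 * K * δ) ^ (n - k + 1) := by ring

section KKT

variable {n : ℕ} {K δ : ℝ} {a : ℕ → ℕ → ℝ} {c : ℕ → ℝ} {y zp zm : ℕ → ℝ} {i : ℕ}

theorem abs_le_of_sum_abs_add_abs_le {l : ℕ} (hKl : (∑ j ∈ Ico 1 l, |a l j|) + |c l| ≤ K)
    (hi : i ∈ Ico 1 l) : |a l i| ≤ K := by
  have := single_le_sum (f := fun j => |a l j|) (fun j _ => abs_nonneg _) hi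
  linarith [abs_nonneg (c l)]

theorem IsKKT.abs_gateInput_le (hkkt : IsKKT n K δ a c y zp zm)
    (hKi : (∑ j ∈ Ico 1 i, |a i j|) + |c i| ≤ K) (hin : i ≤ n) : |gateInput a c y i| ≤ K := by
  have hterm : ∀ j ∈ Ico 1 i, |a i j * y j| ≤ |a i j| := fun j hj => by
    obtain ⟨hj1, hji⟩ := mem_Ico.mp hj
    obtain ⟨hy0, hy1⟩ := hkkt.1 j hj1 (by omega)
    rw [abs_mul, abs_of_nonneg hy0]
    exact mul_le_of_le_one_right (abs_nonneg _) hy1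
  calc |gateInput a c y i| ≤ |∑ j ∈ Ico 1 i, a i j * y j| + |c i| := abs_add_le _ _
    _ ≤ (∑ j ∈ Ico 1 i, |a i j|) + |c i| := by
      gcongr; exact (abs_sum_le_sum_abs _ _).trans (sum_le_sum hterm)
    _ ≤ K := hKi

theorem IsKKT.y_eq_trunc (hkkt : IsKKT n K δ a c y zp zm) (hδ : 0 < δ) (hi : 3 ≤ i) (hin : i ≤ n) :
    y i = trunc (gateInput a c y i - 1 / (2 * δ ^ i) * dpiy n K δ a c i i y zp zm) := by
  have hδi : 0 < 2 * δ ^ i := by positivity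
  have hd : dpy n K δ a c i y zp zm = 2 * δ ^ i *
      (y i - (gateInput a c y i - 1 / (2 * δ ^ i) * dpiy n K δ a c i i y zp zm)) := by
    rw [dpy_eq n K δ a c y zp zm hi hin]
    field_simp
    ring
  obtain ⟨h0, h1⟩ := hkkt.2.2.1 i (by omega) hin
  exact eq_trunc_of_stationary hδi (hkkt.1 i (by omega) hin) (hd ▸ h0) (hd ▸ h1)

theorem IsKKT.gateResidual_eq (hkkt : IsKKT n K δ a c y zp zm) (hδ : 0 < δ) (hK0 : 0 < K)
    (hs : |gateInput a c y i| ≤ K) (hi : 3 ≤ i) (hin : i ≤ n) :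
    gateResidual K a c y zp zm i = y i - trunc (gateInput a c y i) := by
  set s := gateInput a c y i
  have hα : 0 < 2 * K ^ 2 * δ ^ i := by positivity
  obtain ⟨hzp, hzm⟩ := hkkt.2.1 i hi hin
  obtain ⟨⟨hp0, hp1⟩, ⟨hm0, hm1⟩⟩ := hkkt.2.2.2 i hi hin
  have hdp : dpzp n K δ a c i y zp zm = 2 * K ^ 2 * δ ^ i * (zp i - (s - 1) / K) := by
    rw [dpzp_eq n K δ a c y zp zm hi hin]; field_simp; ring
  have hdm : dpzm n K δ a c i y zp zm = 2 * K ^ 2 * δ ^ i * (zm i - -s / K) := by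
    rw [dpzm_eq n K δ a c y zp zm hi hin]; field_simp; ring
  have hp := eq_trunc_of_stationary hα hzp (hdp ▸ hp0) (hdp ▸ hp1)
  have hm := eq_trunc_of_stationary hα hzm (hdm ▸ hm0) (hdm ▸ hm1)
  obtain ⟨hlo, hhi⟩ := abs_le.mp hs
  have := sub_mul_trunc_add_mul_trunc hK0 hlo (by linarith)
  rw [gateResidual, hp, hm]
  linarith

theorem IsKKT.abs_sub_trunc_le (hkkt : IsKKT n K δ a c y zp zm) (hδ : 0 < δ)
    (hi : 3 ≤ i) (hin : i ≤ n) :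
    |y i - trunc (gateInput a c y i)| ≤ |1 / (2 * δ ^ i) * dpiy n K δ a c i i y zp zm| := by
  calc |y i - trunc (gateInput a c y i)|
      = |trunc (gateInput a c y i - 1 / (2 * δ ^ i) * dpiy n K δ a c i i y zp zm)
          - trunc (gateInput a c y i)| := by rw [← hkkt.y_eq_trunc hδ hi hin]
    _ ≤ |1 / (2 * δ ^ i) * dpiy n K δ a c i i y zp zm| := by
      refine (abs_trunc_sub_trunc_le _ _).trans_eq ?_
      rw [sub_sub_cancel_left, abs_neg]

theorem abs_dpiy_le (hK1 : 1 ≤ K) (hδ : 0 < δ) (hi : 1 ≤ i) (hin : i ≤ n)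
    (ha : ∀ l ∈ Icc (i + 1) n, |a l i| ≤ K)
    (hr : ∀ l ∈ Icc (i + 1) n, |gateResidual K a c y zp zm l| ≤ (2 * K * δ) ^ (n + 1 - l)) :
    |1 / (2 * δ ^ i) * dpiy n K δ a c i i y zp zm| ≤ (2 * K * δ) ^ (n + 1 - i) := by
  rw [abs_mul, abs_of_pos (by positivity), one_div, inv_mul_le_iff₀ (by positivity)]
  refine le_trans ?_ (tail_sum_le hK1 hδ.le hin)
  rw [dpiy_eq n K δ a c y zp zm hi]
  refine (abs_add_le _ _).trans (add_le_add ?_ ?_)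
  · rw [abs_mul, abs_of_pos (pow_pos hδ _)]
    split_ifs <;> simp [pow_nonneg hδ.le]
  refine (abs_sum_le_sum_abs _ _).trans (sum_le_sum fun l hl => ?_)
  rw [abs_mul, abs_of_pos (by positivity), mul_assoc (δ ^ l)]
  gcongr
  calc |-2 * a l i * gateResidual K a c y zp zm l|
      = 2 * (|a l i| * |gateResidual K a c y zp zm l|) := by simp [abs_mul, mul_assoc]
    _ ≤ 2 * K * (2 * K * δ) ^ (n + 1 - l) := by
      rw [mul_assoc]; gcongr; exacts [ha l hl, hr l hl]

theorem IsKKT.abs_scaled_dpiy_le (hkkt : IsKKT n K δ a c y zp zm) (hK1 : 1 ≤ K)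
    (hK : ∀ i, 3 ≤ i → i ≤ n → (∑ j ∈ Ico 1 i, |a i j|) + |c i| ≤ K) (hδ : 0 < δ)
    (hi : 3 ≤ i) (hin : i ≤ n) :
    |1 / (2 * δ ^ i) * dpiy n K δ a c i i y zp zm| ≤ (2 * K * δ) ^ (n + 1 - i) := by
  induction i using Nat.strong_decreasing_induction with
  | base => exact ⟨n, fun m hm _ hmn => absurd hmn (by omega)⟩
  | step i ih =>
    refine abs_dpiy_le hK1 hδ (by omega) hin
      (fun l hl => abs_le_of_sum_abs_add_abs_le (hK l (by simp at hl; omega) (by simp at hl; omega))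
        (by simp at hl ⊢; omega)) fun l hl => ?_
    obtain ⟨hil, hln⟩ := mem_Icc.mp hl
    rw [hkkt.gateResidual_eq hδ (by linarith) (hkkt.abs_gateInput_le (hK l (by omega) hln) hln)
      (by omega) hln]
    exact (hkkt.abs_sub_trunc_le hδ (by omega) hln).trans (ih l (by omega) (by omega) hln)

end KKT

theorem kkt_approximate_evaluation_general (n : ℕ) (a : ℕ → ℕ → ℝ) (c : ℕ → ℝ)
    (K : ℝ) (hK1 : 1 ≤ K)
    (hK : ∀ i, 3 ≤ i → i ≤ n → (∑ j ∈ Finset.Ico 1 i, |a i j|) + |c i| ≤ K)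
    (δ : ℝ) (hδ : δ ∈ Set.Ioo (0 : ℝ) 1)
    (y zp zm : ℕ → ℝ) (hkkt : IsKKT n K δ a c y zp zm) :
    ∀ i, 3 ≤ i → i ≤ n →
      |1 / (2 * δ ^ i) * dpiy n K δ a c i i y zp zm| ≤ (2 * K * δ) ^ (n + 1 - i) ∧
      y i = trunc ((∑ j ∈ Finset.Ico 1 i, a i j * y j) + c i
              - 1 / (2 * δ ^ i) * dpiy n K δ a c i i y zp zm) ∧
      |y i - trunc ((∑ j ∈ Finset.Ico 1 i, a i j * y j) + c i)| ≤ (2 * K * δ) ^ (n + 1 - i) := by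
  intro i hi hin
  have hbound := hkkt.abs_scaled_dpiy_le hK1 hK hδ.1 hi hin
  exact ⟨hbound, hkkt.y_eq_trunc hδ.1 hi hin, (hkkt.abs_sub_trunc_le hδ.1 hi hin).trans hbound⟩

/-- Approximate evaluation at a KKT point. -/
theorem kkt_approximate_evaluation (n : ℕ) (hn : 3 ≤ n) (a : ℕ → ℕ → ℝ) (c : ℕ → ℝ)
    (K : ℝ) (hK1 : 1 ≤ K)
    (hK : ∀ i, 3 ≤ i → i ≤ n → (∑ j ∈ Finset.Ico 1 i, |a i j|) + |c i| ≤ K)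
    (δ : ℝ) (hδ : δ ∈ Set.Ioo (0 : ℝ) 1)
    (y zp zm : ℕ → ℝ) (hkkt : IsKKT n K δ a c y zp zm) :
    ∀ i, 3 ≤ i → i ≤ n →
      |1 / (2 * δ ^ i) * dpiy n K δ a c i i y zp zm| ≤ (2 * K * δ) ^ (n + 1 - i) ∧
      y i = trunc ((∑ j ∈ Finset.Ico 1 i, a i j * y j) + c i
              - 1 / (2 * δ ^ i) * dpiy n K δ a c i i y zp zm) ∧
      |y i - trunc ((∑ j ∈ Finset.Ico 1 i, a i j * y j) + c i)| ≤ (2 * K * δ) ^ (n + 1 - i) :=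
  kkt_approximate_evaluation_general n a c K hK1 hK δ hδ y zp zm hkkt
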